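/- arXiv:1610.04312 — 6 statements merged into one kernel-verified Lean document; each statement's English description precedes it below -/
import Mathlib

section
/- A profile (σ₁, σ₂) in a finite two-player game with a partition 𝒮 of the row set R into SISes has no undetectable beneficial deviations if and only if (1) every column c in the support of σ₂ satisfies u₂(σ₁,c') ≤ u₂(σ₁,c) for all columns c', and (2) for every SIS S ∈ 𝒮 and every row r ∈ S in the support of σ₁, u₁(r',σ₂) ≤ u₁(r,σ₂) for all r' ∈ S. -/
open Finset

private lemma dsum_col {R C : Type*} [Fintype R] [Fintype C]
    (a : R → ℝ) (b : C → ℝ) (f : R → C → ℝ) :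
    ∑ r, ∑ c, a r * b c * f r c = ∑ c, b c * ∑ r, a r * f r c := by
  rw [Finset.sum_comm]
  refine Finset.sum_congr rfl fun c _ => ?_
  rw [Finset.mul_sum]
  exact Finset.sum_congr rfl fun r _ => by ring

private lemma dsum_row {R C : Type*} [Fintype R] [Fintype C]
    (a : R → ℝ) (b : C → ℝ) (f : R → C → ℝ) :
    ∑ r, ∑ c, a r * b c * f r c = ∑ r, a r * ∑ c, b c * f r c := by
  refine Finset.sum_congr rfl fun r _ => ?_
  rw [Finset.mul_sum]
  exact Finset.sum_congr rfl fun c _ => by ring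

private lemma swap_sum {α : Type*} [Fintype α] [DecidableEq α]
    (σ v : α → ℝ) (a b : α) (t : ℝ) :
    ∑ x, (σ x + (if x = b then t else 0) - (if x = a then t else 0)) * v x
      = (∑ x, σ x * v x) + t * v b - t * v a := by
  simp [sub_mul, add_mul, Finset.sum_add_distrib, Finset.sum_sub_distrib, ite_mul,
    Finset.sum_ite_eq']

private lemma block_le {α : Type*} (σ σ' w : α → ℝ) (s : Finset α)
    (hn : ∀ x, 0 ≤ σ x) (hn' : ∀ x, 0 ≤ σ' x)
    (hm : ∑ x ∈ s, σ' x = ∑ x ∈ s, σ x)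
    (hbest : ∀ x ∈ s, 0 < σ x → ∀ y ∈ s, w y ≤ w x) :
    ∑ x ∈ s, σ' x * w x ≤ ∑ x ∈ s, σ x * w x := by
  by_cases hz : ∀ x ∈ s, σ x = 0
  · have h0 : ∑ x ∈ s, σ x = 0 := Finset.sum_eq_zero hz
    have h0' : ∀ x ∈ s, σ' x = 0 :=
      (Finset.sum_eq_zero_iff_of_nonneg (fun y _ => hn' y)).mp (hm.trans h0)
    rw [Finset.sum_eq_zero (fun x hx => by rw [h0' x hx, zero_mul]),
        Finset.sum_eq_zero (fun x hx => by rw [hz x hx, zero_mul])]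
  · push_neg at hz
    obtain ⟨x0, hx0, hx0ne⟩ := hz
    have hx0pos : 0 < σ x0 := lt_of_le_of_ne (hn x0) (Ne.symm hx0ne)
    have hub : ∀ y ∈ s, w y ≤ w x0 := hbest x0 hx0 hx0pos
    have heq : ∀ x ∈ s, σ x * w x = σ x * w x0 := by
      intro x hx
      rcases eq_or_lt_of_le (hn x) with h | h
      · rw [← h, zero_mul, zero_mul]
      · have hle : w x0 ≤ w x := hbest x hx h x0 hx0
        rw [le_antisymm (hub x hx) hle]
    calc ∑ x ∈ s, σ' x * w x ≤ ∑ x ∈ s, σ' x * w x0 :=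
          Finset.sum_le_sum (fun x hx => mul_le_mul_of_nonneg_left (hub x hx) (hn' x))
      _ = (∑ x ∈ s, σ' x) * w x0 := (Finset.sum_mul _ _ _).symm
      _ = (∑ x ∈ s, σ x) * w x0 := by rw [hm]
      _ = ∑ x ∈ s, σ x * w x0 := Finset.sum_mul _ _ _
      _ = ∑ x ∈ s, σ x * w x := (Finset.sum_congr rfl heq).symm

/-- A profile (σ₁,σ₂) has no undetectable beneficial deviations
(definition via mixed-strategy deviations, with the row player restricted to
deviations indistinguishable with respect to the SIS partition, encoded by the
labeling function `sis`) iff every column in the support of σ₂ is a best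
response to σ₁ and every row in the support of σ₁ is a within-SIS best
response to σ₂. -/
theorem no_undetectable_deviations_iff
    {R C ι : Type*} [Fintype R] [Fintype C] [DecidableEq ι]
    (u1 u2 : R → C → ℝ) (sis : R → ι)
    (σ1 : R → ℝ) (σ2 : C → ℝ)
    (hσ1 : (∀ r, 0 ≤ σ1 r) ∧ ∑ r, σ1 r = 1)
    (hσ2 : (∀ c, 0 ≤ σ2 c) ∧ ∑ c, σ2 c = 1) :
    ((∀ σ2' : C → ℝ, (∀ c, 0 ≤ σ2' c) → ∑ c, σ2' c = 1 →
        ∑ r, ∑ c, σ1 r * σ2' c * u2 r c ≤ ∑ r, ∑ c, σ1 r * σ2 c * u2 r c) ∧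
      (∀ σ1' : R → ℝ, (∀ r, 0 ≤ σ1' r) → ∑ r, σ1' r = 1 →
        (∀ i : ι, ∑ r ∈ univ.filter (fun r => sis r = i), σ1' r
                = ∑ r ∈ univ.filter (fun r => sis r = i), σ1 r) →
        ∑ r, ∑ c, σ1' r * σ2 c * u1 r c ≤ ∑ r, ∑ c, σ1 r * σ2 c * u1 r c))
    ↔
    ((∀ c, 0 < σ2 c → ∀ c', ∑ r, σ1 r * u2 r c' ≤ ∑ r, σ1 r * u2 r c) ∧
      (∀ r, 0 < σ1 r → ∀ r', sis r' = sis r →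
        ∑ c, σ2 c * u1 r' c ≤ ∑ c, σ2 c * u1 r c)) := by
  classical
  set v : C → ℝ := fun c => ∑ r, σ1 r * u2 r c with hv
  set w : R → ℝ := fun r => ∑ c, σ2 c * u1 r c with hw
  constructor
  · rintro ⟨H2, H1⟩
    constructor
    · -- column best response on support
      intro c hc c'
      by_cases hcc : c' = c
      · subst hcc; exact le_refl _
      set t := σ2 c with ht
      set σ2' : C → ℝ := fun x => σ2 x + (if x = c' then t else 0) - (if x = c then t else 0)
        with hσ2'
      have hnn : ∀ x, 0 ≤ σ2' x := by
        intro x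
        simp only [hσ2']
        split_ifs with h1 h2 h2
        · linarith [hσ2.1 x]
        · linarith [hσ2.1 x, hσ2.1 c]
        · subst h2; simp [ht]
        · linarith [hσ2.1 x]
      have hsum : ∑ x, σ2' x = 1 := by
        simp only [hσ2']
        rw [Finset.sum_sub_distrib, Finset.sum_add_distrib]
        simp [hσ2.2]
      have key := H2 σ2' hnn hsum
      rw [dsum_col σ1 σ2' u2, dsum_col σ1 σ2 u2] at key
      have hswap := swap_sum σ2 (fun c => ∑ r, σ1 r * u2 r c) c c' t
      simp only [hσ2'] at key
      rw [hswap] at key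
      have : t * (∑ r, σ1 r * u2 r c') ≤ t * (∑ r, σ1 r * u2 r c) := by linarith
      exact le_of_mul_le_mul_left this hc
    · -- row best response on support within SIS
      intro r hr r' hss
      by_cases hrr : r' = r
      · subst hrr; exact le_refl _
      set t := σ1 r with ht
      set σ1' : R → ℝ := fun x => σ1 x + (if x = r' then t else 0) - (if x = r then t else 0)
        with hσ1'
      have hnn : ∀ x, 0 ≤ σ1' x := by
        intro x
        simp only [hσ1']
        split_ifs with h1 h2 h2
        · linarith [hσ1.1 x]
        · linarith [hσ1.1 x, hσ1.1 r]
        · subst h2; simp [ht]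
        · linarith [hσ1.1 x]
      have hsum : ∑ x, σ1' x = 1 := by
        simp only [hσ1']
        rw [Finset.sum_sub_distrib, Finset.sum_add_distrib]
        simp [hσ1.2]
      have hfib : ∀ i : ι, ∑ x ∈ univ.filter (fun x => sis x = i), σ1' x
          = ∑ x ∈ univ.filter (fun x => sis x = i), σ1 x := by
        intro i
        simp only [hσ1']
        rw [Finset.sum_sub_distrib, Finset.sum_add_distrib]
        rw [Finset.sum_ite_eq' _ r' (fun _ => t), Finset.sum_ite_eq' _ r (fun _ => t)]
        simp only [Finset.mem_filter, Finset.mem_univ, true_and, hss]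
        ring
      have key := H1 σ1' hnn hsum hfib
      rw [dsum_row σ1' σ2 u1, dsum_row σ1 σ2 u1] at key
      have hswap := swap_sum σ1 (fun r => ∑ c, σ2 c * u1 r c) r r' t
      simp only [hσ1'] at key
      rw [hswap] at key
      have : t * (∑ c, σ2 c * u1 r' c) ≤ t * (∑ c, σ2 c * u1 r c) := by linarith
      exact le_of_mul_le_mul_left this hr
  · rintro ⟨h2, h1⟩
    constructor
    · intro σ2' hnn hsum
      rw [dsum_col σ1 σ2' u2, dsum_col σ1 σ2 u2]
      exact block_le σ2 σ2' (fun c => ∑ r, σ1 r * u2 r c) univ hσ2.1 hnn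
        (by rw [hsum, hσ2.2]) (fun x _ hx y _ => h2 x hx y)
    · intro σ1' hnn hsum hfib
      rw [dsum_row σ1' σ2 u1, dsum_row σ1 σ2 u1]
      have hL := Finset.sum_fiberwise_of_maps_to (s := univ) (g := sis) (t := univ.image sis)
        (fun x _ => Finset.mem_image_of_mem sis (Finset.mem_univ x))
        (fun x => σ1' x * ∑ c, σ2 c * u1 x c)
      have hR := Finset.sum_fiberwise_of_maps_to (s := univ) (g := sis) (t := univ.image sis)
        (fun x _ => Finset.mem_image_of_mem sis (Finset.mem_univ x))
        (fun x => σ1 x * ∑ c, σ2 c * u1 x c)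
      rw [← hL, ← hR]
      refine Finset.sum_le_sum fun i _ => ?_
      refine block_le σ1 σ1' (fun r => ∑ c, σ2 c * u1 r c) _ hσ1.1 hnn (hfib i) ?_
      intro x hx hxpos y hy
      simp only [Finset.mem_filter, Finset.mem_univ, true_and] at hx hy
      exact h1 x hxpos y (hy.trans hx.symm)
end

section
/- In the 4×2 game with rows a,b,c,d, columns A,B, row-player payoffs u₁(a,A)=7, u₁(a,B)=2, u₁(b,A)=6, u₁(b,B)=0, u₁(c,A)=5, u₁(c,B)=0, u₁(d,A)=4, u₁(d,B)=1, column payoffs u₂(a,A)=0, u₂(a,B)=1, u₂(b,A)=1, u₂(b,B)=0, u₂(c,A)=0, u₂(c,B)=1, u₂(d,A)=1, u₂(d,B)=0, and SIS partition {{a,b},{c,d}}, every profile with no undetectable beneficial deviations gives the row player expected utility at most 7/2. -/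
open Finset

/-- Row payoffs of the 4×2 example game (rows a,b,c,d; columns A,B). -/
def exU1 : Fin 4 → Fin 2 → ℝ := ![![7, 2], ![6, 0], ![5, 0], ![4, 1]]

/-- Column payoffs of the 4×2 example game. -/
def exU2 : Fin 4 → Fin 2 → ℝ := ![![0, 1], ![1, 0], ![0, 1], ![1, 0]]

/-- SIS labeling: {a,b} is one SIS and {c,d} is the other. -/
def exSis : Fin 4 → Fin 2 := ![0, 0, 1, 1]

/-- in the 4×2 example game, every profile with no undetectable
beneficial deviations gives the row player expected utility at most 7/2. -/
theorem example_SELO_upper_bound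
    (σ1 : Fin 4 → ℝ) (σ2 : Fin 2 → ℝ)
    (hσ1 : (∀ r, 0 ≤ σ1 r) ∧ ∑ r, σ1 r = 1)
    (hσ2 : (∀ c, 0 ≤ σ2 c) ∧ ∑ c, σ2 c = 1)
    (hcol : ∀ c, 0 < σ2 c → ∀ c', ∑ r, σ1 r * exU2 r c' ≤ ∑ r, σ1 r * exU2 r c)
    (hrow : ∀ r, 0 < σ1 r → ∀ r', exSis r' = exSis r →
        ∑ c, σ2 c * exU1 r' c ≤ ∑ c, σ2 c * exU1 r c) :
    ∑ r, ∑ c, σ1 r * σ2 c * exU1 r c ≤ 7/2 := by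
  obtain ⟨h1, hs1⟩ := hσ1
  obtain ⟨h2, hs2⟩ := hσ2
  simp only [Fin.sum_univ_four, Fin.sum_univ_two] at hs1 hs2 ⊢
  have ha := h1 0; have hb0 := h1 1; have hc0 := h1 2; have hd0 := h1 3
  have hp0 := h2 0; have hq0 := h2 1
  have hb : σ1 1 = 0 := by
    by_contra hb
    have hbpos : 0 < σ1 1 := lt_of_le_of_ne hb0 (Ne.symm hb)
    have h := hrow 1 hbpos 0 (by decide)
    simp [Fin.sum_univ_two, exU1, Matrix.cons_val_zero, Matrix.cons_val_one] at h
    nlinarith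
  have hF1 : σ1 2 * (σ2 1 - σ2 0) ≤ 0 := by
    rcases eq_or_lt_of_le hc0 with h | h
    · rw [← h]; ring_nf; simp
    · have hh := hrow 2 h 3 (by decide)
      simp [Fin.sum_univ_two, exU1] at hh
      nlinarith
  have hF2 : σ1 3 * (σ2 0 - σ2 1) ≤ 0 := by
    rcases eq_or_lt_of_le hd0 with h | h
    · rw [← h]; ring_nf; simp
    · have hh := hrow 3 h 2 (by decide)
      simp [Fin.sum_univ_two, exU1] at hh
      nlinarith
  have hF3 : σ2 0 * (σ1 0 + σ1 2 - σ1 1 - σ1 3) ≤ 0 := by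
    rcases eq_or_lt_of_le hp0 with h | h
    · rw [← h]; ring_nf; simp
    · have hh := hcol 0 h 1
      simp [Fin.sum_univ_four, exU2] at hh
      nlinarith
  have hF4 : σ2 1 * (σ1 1 + σ1 3 - σ1 0 - σ1 2) ≤ 0 := by
    rcases eq_or_lt_of_le hq0 with h | h
    · rw [← h]; ring_nf; simp
    · have hh := hcol 1 h 0
      simp [Fin.sum_univ_four, exU2] at hh
      nlinarith
  simp only [exU1, Matrix.cons_val_zero, Matrix.cons_val_one, Matrix.head_cons,
    Matrix.cons_val_fin_one, Matrix.cons_val', Matrix.cons_val_two, Matrix.cons_val_three,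
    Matrix.tail_cons, Matrix.head_fin_const]
  nlinarith [hF1, hF2, hF3, hF4, mul_nonneg ha hp0, mul_nonneg ha hq0,
    mul_nonneg hc0 hp0, mul_nonneg hc0 hq0, mul_nonneg hd0 hp0, mul_nonneg hd0 hq0,
    mul_nonneg (mul_nonneg hd0 hp0) hq0, mul_nonneg (mul_nonneg ha hp0) hq0,
    mul_nonneg (mul_nonneg hc0 hp0) hq0]
end

section
/- If an uncorrelated profile (σ₁,σ₂) has no undetectable beneficial deviations, then the correlated profile σ defined by σ(r,c) = σ₁(r)·σ₂(c) has no undetectable beneficial deviations in the correlated sense. Consequently, the row player's utility in a SESLO (optimal correlated profile with no undetectable beneficial deviations) is at least her utility in a SELO (optimal uncorrelated profile with no undetectable beneficial deviations). -/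
open Finset

/-- if an uncorrelated profile (σ₁,σ₂) has no undetectable
beneficial deviations, then the product correlated profile
σ(r,c) = σ₁(r)·σ₂(c) has no undetectable beneficial deviations in the
correlated sense; consequently there is a correlated profile with no
undetectable beneficial deviations whose row-player utility is at least that
of (σ₁,σ₂) (so the SESLO value is at least the SELO value). -/
theorem product_of_uncorrelated_is_correlated_NUBD
    {R C ι : Type*} [Fintype R] [Fintype C]
    (u1 u2 : R → C → ℝ) (sis : R → ι)
    (σ1 : R → ℝ) (σ2 : C → ℝ)
    (hσ1 : (∀ r, 0 ≤ σ1 r) ∧ ∑ r, σ1 r = 1)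
    (hσ2 : (∀ c, 0 ≤ σ2 c) ∧ ∑ c, σ2 c = 1)
    (hcol : ∀ c, 0 < σ2 c → ∀ c', ∑ r, σ1 r * u2 r c' ≤ ∑ r, σ1 r * u2 r c)
    (hrow : ∀ r, 0 < σ1 r → ∀ r', sis r' = sis r →
        ∑ c, σ2 c * u1 r' c ≤ ∑ c, σ2 c * u1 r c) :
    ((∀ c c', 0 ≤ ∑ r, (σ1 r * σ2 c) * (u2 r c - u2 r c')) ∧
     (∀ r r', sis r = sis r' → 0 ≤ ∑ c, (σ1 r * σ2 c) * (u1 r c - u1 r' c))) ∧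
    (∃ σ : R → C → ℝ, (∀ r c, 0 ≤ σ r c) ∧ (∑ r, ∑ c, σ r c = 1) ∧
      (∀ c c', 0 ≤ ∑ r, σ r c * (u2 r c - u2 r c')) ∧
      (∀ r r', sis r = sis r' → 0 ≤ ∑ c, σ r c * (u1 r c - u1 r' c)) ∧
      ∑ r, ∑ c, σ1 r * σ2 c * u1 r c ≤ ∑ r, ∑ c, σ r c * u1 r c) := by

  have hc : ∀ c c', 0 ≤ ∑ r, (σ1 r * σ2 c) * (u2 r c - u2 r c') := by
    intro c c'
    have h : ∑ r, (σ1 r * σ2 c) * (u2 r c - u2 r c')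
        = σ2 c * (∑ r, σ1 r * u2 r c - ∑ r, σ1 r * u2 r c') := by
      rw [mul_sub, Finset.mul_sum, Finset.mul_sum, ← Finset.sum_sub_distrib]
      exact Finset.sum_congr rfl (fun r _ => by ring)
    rw [h]
    rcases lt_or_eq_of_le (hσ2.1 c) with hpos | heq
    · exact mul_nonneg (le_of_lt hpos) (sub_nonneg.mpr (hcol c hpos c'))
    · rw [← heq]; simp
  have hr : ∀ r r', sis r = sis r' → 0 ≤ ∑ c, (σ1 r * σ2 c) * (u1 r c - u1 r' c) := by
    intro r r' hs
    have h : ∑ c, (σ1 r * σ2 c) * (u1 r c - u1 r' c)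
        = σ1 r * (∑ c, σ2 c * u1 r c - ∑ c, σ2 c * u1 r' c) := by
      rw [mul_sub, Finset.mul_sum, Finset.mul_sum, ← Finset.sum_sub_distrib]
      exact Finset.sum_congr rfl (fun c _ => by ring)
    rw [h]
    rcases lt_or_eq_of_le (hσ1.1 r) with hpos | heq
    · exact mul_nonneg (le_of_lt hpos) (sub_nonneg.mpr (hrow r hpos r' hs.symm))
    · rw [← heq]; simp
  refine ⟨⟨hc, hr⟩, fun r c => σ1 r * σ2 c, fun r c => mul_nonneg (hσ1.1 r) (hσ2.1 c), ?_, hc, hr, le_refl _⟩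
  simp only [← Finset.mul_sum, hσ2.2, mul_one, hσ1.2]
end

section
/- In the reduction game constructed from an EXACT-COVER-BY-3-SETS instance with a valid exact cover, the profile in which the row player plays uniformly over the m/3 rows T_j⁺ corresponding to the cover and the column player plays uniformly over the corresponding m/3 columns T_j is a Nash equilibrium giving the row player expected utility 1. -/
open Finset

/-- Row payoffs of the EXACT-COVER-BY-3-SETS reduction game. Rows are pairs
(j, b) with b = true meaning T_j⁺ and b = false meaning T_j⁻; columns are
either subsets (Sum.inl j) or elements (Sum.inr t). -/
noncomputable def xcU1 {T : Type*} (k : ℕ) (m : ℕ) :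
    (Fin k × Bool) → (Fin k ⊕ T) → ℝ := fun r c =>
  match c with
  | Sum.inl j' => if r.2 then (if r.1 = j' then (m : ℝ) / 3 else 0) else 1
  | Sum.inr _ => 0

/-- Column payoffs of the reduction game. -/
noncomputable def xcU2 {T : Type*} [DecidableEq T] (k : ℕ) (m : ℕ)
    (sets : Fin k → Finset T) : (Fin k × Bool) → (Fin k ⊕ T) → ℝ := fun r c =>
  match c with
  | Sum.inl _ => (m : ℝ) / 3 - 1
  | Sum.inr t => if r.2 = true ∧ t ∈ sets r.1 then 0 else (m : ℝ) / 3

/-- if the EXACT-COVER-BY-3-SETS instance has a solution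
`cover` (m/3 subsets forming an exact cover), then the profile where the row
player plays uniformly over the rows T_j⁺ with j in the cover and the column
player plays uniformly over the columns T_j with j in the cover is a Nash
equilibrium giving the row player expected utility 1. -/
theorem exact_cover_gives_nash
    {T : Type*} [Fintype T] [DecidableEq T]
    (k : ℕ) (sets : Fin k → Finset T)
    (hsets : ∀ j, (sets j).card = 3)
    (hm : 0 < Fintype.card T)
    (cover : Finset (Fin k))
    (hcard : cover.card * 3 = Fintype.card T)
    (hexact : ∀ t : T, ∃! j, j ∈ cover ∧ t ∈ sets j) :
    let m := Fintype.card T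
    let σ1 : (Fin k × Bool) → ℝ := fun r =>
      if r.2 = true ∧ r.1 ∈ cover then 3 / (m : ℝ) else 0
    let σ2 : (Fin k ⊕ T) → ℝ := fun c =>
      match c with
      | Sum.inl j => if j ∈ cover then 3 / (m : ℝ) else 0
      | Sum.inr _ => 0
    (∀ σ1' : (Fin k × Bool) → ℝ, (∀ r, 0 ≤ σ1' r) → ∑ r, σ1' r = 1 →
        ∑ r, ∑ c, σ1' r * σ2 c * xcU1 k m r c
          ≤ ∑ r, ∑ c, σ1 r * σ2 c * xcU1 k m r c) ∧
    (∀ σ2' : (Fin k ⊕ T) → ℝ, (∀ c, 0 ≤ σ2' c) → ∑ c, σ2' c = 1 →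
        ∑ r, ∑ c, σ1 r * σ2' c * xcU2 k m sets r c
          ≤ ∑ r, ∑ c, σ1 r * σ2 c * xcU2 k m sets r c) ∧
    ∑ r, ∑ c, σ1 r * σ2 c * xcU1 k m r c = 1 := by
  intro m σ1 σ2
  have hmR : (m : ℝ) ≠ 0 := Nat.cast_ne_zero.mpr hm.ne'
  have hcardR : (cover.card : ℝ) * 3 = (m : ℝ) := by exact_mod_cast hcard
  have hind : ∀ a : ℝ, ∑ j : Fin k, (if j ∈ cover then a else 0) = cover.card * a := by
    intro a
    rw [Finset.sum_ite_mem, Finset.univ_inter, Finset.sum_const, nsmul_eq_mul]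
  have hone : (cover.card : ℝ) * (3 / (m : ℝ)) = 1 := by
    field_simp
    linarith
  have hprod : (3 / (m : ℝ)) * ((m : ℝ) / 3) = 1 := by field_simp
  have hσ1sum : ∑ r : Fin k × Bool, σ1 r = 1 := by
    rw [Fintype.sum_prod_type]
    simp only [σ1, Fintype.sum_bool]
    simp only [show ((true : Bool) = true) = True from by simp,
      show ((false : Bool) = true) = False from by simp, true_and, false_and, if_false, add_zero]
    rw [hind, hone]
  have hinner : ∀ (j : Fin k) (b : Bool), (∑ c, σ2 c * xcU1 k m (j, b) c)
      = if b = true then (if j ∈ cover then 1 else 0) else 1 := by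
    intro j b
    rw [Fintype.sum_sum_type]
    have h2 : (∑ t : T, σ2 (Sum.inr t) * xcU1 k m (j, b) (Sum.inr t)) = 0 := by
      simp [σ2, xcU1]
    rw [h2, add_zero]
    cases b with
    | false =>
      simp only [xcU1, σ2, if_neg (by simp : ¬ ((false : Bool) = true)), mul_one]
      rw [hind, hone]
    | true =>
      rw [Finset.sum_eq_single j]
      · by_cases hj : j ∈ cover <;> simp [xcU1, σ2, hj, hprod]
      · intro j' _ hne
        simp [xcU1, σ2, Ne.symm hne]
      · simp
  -- value of the game for player 1
  have hval : (∑ r, ∑ c, σ1 r * σ2 c * xcU1 k m r c) = 1 := by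
    simp_rw [mul_assoc, ← Finset.mul_sum]
    have : ∀ r : Fin k × Bool, σ1 r * (∑ c, σ2 c * xcU1 k m r c) = σ1 r := by
      rintro ⟨j, b⟩
      rw [hinner]
      by_cases hb : b = true
      · subst hb
        by_cases hj : j ∈ cover
        · simp [hj]
        · simp [σ1, hj]
      · simp at hb
        subst hb
        simp
    rw [Finset.sum_congr rfl fun r _ => this r, hσ1sum]
  have hσ2sum : ∑ c : Fin k ⊕ T, σ2 c = 1 := by
    rw [Fintype.sum_sum_type]
    simp only [σ2]
    rw [hind, hone]
    simp
  -- player 2's payoff is constant across columns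
  have hcol : ∀ c : Fin k ⊕ T, (∑ r, σ1 r * xcU2 k m sets r c) = (m : ℝ) / 3 - 1 := by
    intro c
    cases c with
    | inl j' =>
      simp only [xcU2]
      rw [← Finset.sum_mul, hσ1sum, one_mul]
    | inr t =>
      rw [Fintype.sum_prod_type]
      simp only [σ1, xcU2, Fintype.sum_bool]
      simp only [show ((true : Bool) = true) = True from by simp,
        show ((false : Bool) = true) = False from by simp, true_and, false_and, if_false,
        zero_mul, add_zero]
      obtain ⟨j₀, ⟨hj₀c, hj₀t⟩, huniq⟩ := hexact t
      have hsplit : ∀ j : Fin k,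
          (if j ∈ cover then 3 / (m : ℝ) else 0) * (if t ∈ sets j then 0 else (m : ℝ) / 3)
          = if j ∈ cover then (3 / (m : ℝ)) * (if t ∈ sets j then 0 else (m : ℝ) / 3) else 0 := by
        intro j
        by_cases hj : j ∈ cover <;> simp [hj]
      rw [Finset.sum_congr rfl fun j _ => hsplit j, Finset.sum_ite_mem, Finset.univ_inter,
        ← Finset.add_sum_erase cover _ hj₀c]
      have h0 : (3 / (m : ℝ)) * (if t ∈ sets j₀ then 0 else (m : ℝ) / 3) = 0 := by
        rw [if_pos hj₀t, mul_zero]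
      rw [h0, zero_add]
      have hrest : ∀ j ∈ cover.erase j₀,
          (3 / (m : ℝ)) * (if t ∈ sets j then 0 else (m : ℝ) / 3) = 1 := by
        intro j hj
        obtain ⟨hne, hjc⟩ := Finset.mem_erase.mp hj
        have ht : t ∉ sets j := fun ht => hne (huniq j ⟨hjc, ht⟩)
        rw [if_neg ht, hprod]
      rw [Finset.sum_congr rfl hrest, Finset.sum_const, Finset.card_erase_of_mem hj₀c,
        nsmul_eq_mul, mul_one]
      have h1 : 1 ≤ cover.card := Finset.card_pos.mpr ⟨j₀, hj₀c⟩
      rw [Nat.cast_sub h1, Nat.cast_one]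
      have : (cover.card : ℝ) = (m : ℝ) / 3 := by
        field_simp
        linarith
      rw [this]
  have hP2 : ∀ τ : (Fin k ⊕ T) → ℝ, (∑ c, τ c) = 1 →
      (∑ r, ∑ c, σ1 r * τ c * xcU2 k m sets r c) = (m : ℝ) / 3 - 1 := by
    intro τ hτ
    rw [Finset.sum_comm]
    have : ∀ c : Fin k ⊕ T, (∑ r, σ1 r * τ c * xcU2 k m sets r c)
        = τ c * ((m : ℝ) / 3 - 1) := by
      intro c
      rw [← hcol c, Finset.mul_sum]
      exact Finset.sum_congr rfl fun r _ => by ring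
    rw [Finset.sum_congr rfl fun c _ => this c, ← Finset.sum_mul, hτ, one_mul]
  refine ⟨?_, ?_, hval⟩
  · intro σ1' hpos hsum
    rw [hval]
    simp_rw [mul_assoc, ← Finset.mul_sum]
    calc (∑ r : Fin k × Bool, σ1' r * ∑ c, σ2 c * xcU1 k m r c)
        ≤ ∑ r : Fin k × Bool, σ1' r * 1 := by
          refine Finset.sum_le_sum fun r _ => mul_le_mul_of_nonneg_left ?_ (hpos r)
          obtain ⟨j, b⟩ := r
          rw [hinner]
          split_ifs <;> norm_num
      _ = 1 := by simp [hsum]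
  · intro σ2' hpos hsum
    rw [hP2 σ2' hsum, hP2 σ2 hσ2sum]
end

section
/- In the reduction game constructed from an EXACT-COVER-BY-3-SETS instance, if there exists a mixed profile with no undetectable beneficial deviations (with SISes {T_j⁺, T_j⁻}) giving the row player strictly positive expected utility, then the EXACT-COVER-BY-3-SETS instance has a solution: there exist m/3 subsets T_j whose union is T. -/
open Finset

/-- the rows T_j⁺ and T_j⁻ form one SIS for each j (the SIS
label is the first component).  If there is a mixed profile with no
undetectable beneficial deviations giving the row player strictly positive
expected utility, then the EXACT-COVER-BY-3-SETS instance has a solution: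
m/3 of the subsets cover all of T. -/
theorem positive_utility_gives_exact_cover
    {T : Type*} [Fintype T] [DecidableEq T]
    (k : ℕ) (sets : Fin k → Finset T)
    (hsets : ∀ j, (sets j).card = 3)
    (hm : 0 < Fintype.card T)
    (hdvd : 3 ∣ Fintype.card T)
    (σ1 : (Fin k × Bool) → ℝ) (σ2 : (Fin k ⊕ T) → ℝ)
    (hσ1 : (∀ r, 0 ≤ σ1 r) ∧ ∑ r, σ1 r = 1)
    (hσ2 : (∀ c, 0 ≤ σ2 c) ∧ ∑ c, σ2 c = 1)
    (hcol : ∀ c, 0 < σ2 c → ∀ c',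
        ∑ r, σ1 r * xcU2 k (Fintype.card T) sets r c'
          ≤ ∑ r, σ1 r * xcU2 k (Fintype.card T) sets r c)
    (hrow : ∀ r, 0 < σ1 r → ∀ r' : Fin k × Bool, r'.1 = r.1 →
        ∑ c, σ2 c * xcU1 k (Fintype.card T) r' c
          ≤ ∑ c, σ2 c * xcU1 k (Fintype.card T) r c)
    (hposutil : 0 < ∑ r, ∑ c, σ1 r * σ2 c * xcU1 k (Fintype.card T) r c) :
    ∃ cover : Finset (Fin k), cover.card * 3 = Fintype.card T ∧
      ∀ t : T, ∃ j ∈ cover, t ∈ sets j := by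
  classical
  obtain ⟨h1n, h1s⟩ := hσ1
  obtain ⟨h2n, h2s⟩ := hσ2
  set m := Fintype.card T with hmdef
  have hM : (0:ℝ) < m := by exact_mod_cast hm
  -- Step 1: some subset-column has positive probability
  have hj0 : ∃ j0 : Fin k, 0 < σ2 (Sum.inl j0) := by
    by_contra h
    push_neg at h
    have hz : ∀ j, σ2 (Sum.inl j) = 0 := fun j => le_antisymm (h j) (h2n _)
    have hzero : ∑ r, ∑ c, σ1 r * σ2 c * xcU1 k m r c = 0 := by
      refine Finset.sum_eq_zero fun r _ => Finset.sum_eq_zero fun c _ => ?_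
      cases c with
      | inl j => rw [hz j]; ring
      | inr t => simp [xcU1]
    rw [hzero] at hposutil
    exact lt_irrefl _ hposutil
  obtain ⟨j0, hj0⟩ := hj0
  -- payoff of any subset column
  have hpayl : ∀ j : Fin k, ∑ r, σ1 r * xcU2 k m sets r (Sum.inl j)
      = (m:ℝ)/3 - 1 := by
    intro j
    simp only [xcU2]
    rw [← Finset.sum_mul, h1s, one_mul]
  -- weight covering t
  set w : T → ℝ := fun t => ∑ r : Fin k × Bool,
      if r.2 = true ∧ t ∈ sets r.1 then σ1 r else 0 with hwdef
  have hterm : ∀ (t : T) (r : Fin k × Bool), σ1 r * xcU2 k m sets r (Sum.inr t)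
      = σ1 r * ((m:ℝ)/3) - (m:ℝ)/3 * (if r.2 = true ∧ t ∈ sets r.1 then σ1 r else 0) := by
    intro t r
    simp only [xcU2]
    by_cases hP : r.2 = true ∧ t ∈ sets r.1 <;> simp [hP] <;> ring
  have hpayr : ∀ t : T, ∑ r, σ1 r * xcU2 k m sets r (Sum.inr t)
      = (m:ℝ)/3 - (m:ℝ)/3 * w t := by
    intro t
    calc ∑ r, σ1 r * xcU2 k m sets r (Sum.inr t)
        = ∑ r : Fin k × Bool, (σ1 r * ((m:ℝ)/3)
            - (m:ℝ)/3 * (if r.2 = true ∧ t ∈ sets r.1 then σ1 r else 0)) :=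
          Finset.sum_congr rfl fun r _ => hterm t r
      _ = (m:ℝ)/3 - (m:ℝ)/3 * w t := by
          rw [Finset.sum_sub_distrib, ← Finset.sum_mul, ← Finset.mul_sum, h1s, one_mul,
            hwdef]
  have hwge : ∀ t : T, 1 ≤ (m:ℝ)/3 * w t := by
    intro t
    have := hcol (Sum.inl j0) hj0 (Sum.inr t)
    rw [hpayl, hpayr] at this
    linarith
  -- sum of weights
  have hrowsum : ∀ r : Fin k × Bool,
      (∑ t : T, if r.2 = true ∧ t ∈ sets r.1 then σ1 r else 0)
        = if r.2 = true then 3 * σ1 r else 0 := by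
    rintro ⟨j, b⟩
    cases b
    · simp
    · simp only [true_and, if_true]
      rw [Finset.sum_ite_mem, Finset.univ_inter, Finset.sum_const, hsets]
      simp [mul_comm]
  have hwsum : ∑ t : T, w t = 3 * ∑ j : Fin k, σ1 (j, true) := by
    rw [hwdef]
    simp only
    rw [Finset.sum_comm]
    rw [Finset.sum_congr rfl fun r _ => hrowsum r, Fintype.sum_prod_type,
      Finset.mul_sum]
    refine Finset.sum_congr rfl fun j _ => ?_
    rw [Fintype.sum_bool]
    simp
  -- all mass on true rows
  have hA : 1 ≤ ∑ j : Fin k, σ1 (j, true) := by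
    have h1 : (m:ℝ) * 1 ≤ ∑ t : T, (m:ℝ)/3 * w t := by
      have := Finset.sum_le_sum (fun t (_ : t ∈ Finset.univ) => hwge t)
      simpa [Finset.card_univ, hmdef] using this
    rw [← Finset.mul_sum, hwsum] at h1
    nlinarith
  have hfalse : ∀ j : Fin k, σ1 (j, false) = 0 := by
    have hsplit : (∑ j : Fin k, σ1 (j, true)) + (∑ j : Fin k, σ1 (j, false)) = 1 := by
      rw [← h1s, Fintype.sum_prod_type]
      rw [← Finset.sum_add_distrib]
      refine (Finset.sum_congr rfl fun j _ => ?_).symm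
      rw [Fintype.sum_bool]
    have hBle : (∑ j : Fin k, σ1 (j, false)) ≤ 0 := by linarith
    have hB0 : (∑ j : Fin k, σ1 (j, false)) = 0 :=
      le_antisymm hBle (Finset.sum_nonneg fun j _ => h1n _)
    intro j
    have := Finset.sum_eq_zero_iff_of_nonneg (fun j (_ : j ∈ Finset.univ) => h1n (j, false))
    exact (this.mp hB0) j (Finset.mem_univ j)
  -- the cover
  set cover : Finset (Fin k) := Finset.univ.filter (fun j => 0 < σ1 (j, true)) with hcover
  have hcov : ∀ t : T, ∃ j ∈ cover, t ∈ sets j := by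
    intro t
    by_contra h
    push_neg at h
    have hw0 : w t = 0 := by
      rw [hwdef]
      refine Finset.sum_eq_zero fun r _ => ?_
      by_cases hP : r.2 = true ∧ t ∈ sets r.1
      · have hj : r.1 ∉ cover := fun hjc => h r.1 hjc hP.2
        rw [hcover] at hj
        simp only [Finset.mem_filter, Finset.mem_univ, true_and, not_lt] at hj
        have : σ1 (r.1, true) = 0 := le_antisymm hj (h1n _)
        simp only [hP, if_true]
        rw [← hP.1] at this
        simpa using this
      · simp [hP]
    have := hwge t
    rw [hw0] at this
    linarith
  -- row payoffs
  set P : ℝ := ∑ j : Fin k, σ2 (Sum.inl j) with hPdef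
  have hpayfalse : ∀ j : Fin k, ∑ c, σ2 c * xcU1 k m (j, false) c = P := by
    intro j
    rw [Fintype.sum_sum_type]
    simp [xcU1, hPdef]
  have hpaytrue : ∀ j : Fin k, ∑ c, σ2 c * xcU1 k m (j, true) c
      = (m:ℝ)/3 * σ2 (Sum.inl j) := by
    intro j
    rw [Fintype.sum_sum_type]
    simp [xcU1, mul_ite, Finset.sum_ite_eq, Finset.sum_ite_eq', mul_comm]
  have hPpos : 0 < P := by
    have : σ2 (Sum.inl j0) ≤ P := by
      rw [hPdef]
      exact Finset.single_le_sum (fun j _ => h2n _) (Finset.mem_univ j0)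
    linarith
  have hPle : ∀ j ∈ cover, P ≤ (m:ℝ)/3 * σ2 (Sum.inl j) := by
    intro j hj
    rw [hcover] at hj
    simp only [Finset.mem_filter, Finset.mem_univ, true_and] at hj
    have := hrow (j, true) hj (j, false) rfl
    rw [hpayfalse, hpaytrue] at this
    exact this
  -- card bound
  have hcardle : (cover.card : ℝ) * P ≤ (m:ℝ)/3 * P := by
    calc (cover.card : ℝ) * P = ∑ _j ∈ cover, P := by
          rw [Finset.sum_const, nsmul_eq_mul]
      _ ≤ ∑ j ∈ cover, (m:ℝ)/3 * σ2 (Sum.inl j) := Finset.sum_le_sum hPle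
      _ = (m:ℝ)/3 * ∑ j ∈ cover, σ2 (Sum.inl j) := by rw [Finset.mul_sum]
      _ ≤ (m:ℝ)/3 * P := by
          refine mul_le_mul_of_nonneg_left ?_ (by positivity)
          rw [hPdef]
          exact Finset.sum_le_sum_of_subset_of_nonneg (Finset.subset_univ cover)
            (fun j _ _ => h2n _)
  have hcard1 : 3 * cover.card ≤ m := by
    have h1 : (cover.card : ℝ) ≤ (m:ℝ)/3 := le_of_mul_le_mul_right hcardle hPpos
    have h2 : ((3 * cover.card : ℕ) : ℝ) ≤ (m : ℝ) := by push_cast; linarith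
    exact_mod_cast h2
  have hcard2 : m ≤ 3 * cover.card := by
    have hsub : (Finset.univ : Finset T) ⊆ cover.biUnion sets := by
      intro t _
      obtain ⟨j, hj, ht⟩ := hcov t
      exact Finset.mem_biUnion.mpr ⟨j, hj, ht⟩
    calc m = (Finset.univ : Finset T).card := (Finset.card_univ).symm
      _ ≤ (cover.biUnion sets).card := Finset.card_le_card hsub
      _ ≤ ∑ j ∈ cover, (sets j).card := Finset.card_biUnion_le
      _ = 3 * cover.card := by
          rw [Finset.sum_congr rfl fun j _ => hsets j, Finset.sum_const,
            smul_eq_mul, mul_comm]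
  exact ⟨cover, by omega, hcov⟩
end

section
/- The set of correlated profiles with no undetectable beneficial deviations (for a fixed finite game and SIS partition) is a nonempty, compact, convex polytope in the simplex over R × C; hence there exists a SESLO, i.e., a correlated profile with no undetectable beneficial deviations maximizing the row player's expected utility. -/
/-!
Convexity and compactness hold because the set is cut out of the simplex over `R × C` by finitely
many linear inequalities, and then the linear objective attains its maximum once the set is
nonempty. Nonemptiness has content: with a single SIS the set consists of the correlated
equilibria, and a finer partition only drops constraints. Correlated equilibria exist by the
argument of Hart and Schmeidler. If none existed, the minimax theorem would give a mixture `q`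
of deviations that is strictly unprofitable at every outcome. Read the row and column parts of
`q` as transition rates and take distributions `p`, `p'` in which inflow equals outflow at every
state; then the expected gain of `q` under `p ⊗ p'` telescopes to zero, a contradiction.
-/

open Finset Matrix

theorem Matrix.exists_isSaddlePointOn_stdSimplex {X Y : Type*} [Fintype X] [Fintype Y]
    [Nonempty X] [Nonempty Y] (M : Matrix X Y ℝ) :
    ∃ p ∈ stdSimplex ℝ X, ∃ q ∈ stdSimplex ℝ Y,
      IsSaddlePointOn (stdSimplex ℝ X) (stdSimplex ℝ Y) (fun p q => p ⬝ᵥ M *ᵥ q) p q := by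
  classical
  let B : (X → ℝ) →ₗ[ℝ] (Y → ℝ) →ₗ[ℝ] ℝ := Matrix.toLinearMap₂' ℝ M
  have hB : ∀ p q, B p q = p ⬝ᵥ M *ᵥ q := Matrix.toLinearMap₂'_apply' M
  simp_rw [← hB]
  exact Sion.exists_isSaddlePointOn
    ⟨_, single_mem_stdSimplex ℝ (Classical.arbitrary X)⟩ (convex_stdSimplex ℝ X)
    (isCompact_stdSimplex ℝ X)
    (fun q _ =>
      (B.flip q).continuous_of_finiteDimensional.lowerSemicontinuous.lowerSemicontinuousOn _)
    (fun q _ => ((B.flip q).convexOn (convex_stdSimplex ℝ X)).quasiconvexOn)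
    (convex_stdSimplex ℝ Y) ⟨_, single_mem_stdSimplex ℝ (Classical.arbitrary Y)⟩
    (isCompact_stdSimplex ℝ Y)
    (fun p _ =>
      (B p).continuous_of_finiteDimensional.upperSemicontinuous.upperSemicontinuousOn _)
    (fun p _ => ((B p).concaveOn (convex_stdSimplex ℝ Y)).quasiconcaveOn)

theorem Matrix.exists_mulVec_nonneg_or_exists_vecMul_neg {X Y : Type*} [Fintype X] [Fintype Y]
    [Nonempty X] [Nonempty Y] (M : Matrix X Y ℝ) :
    (∃ q ∈ stdSimplex ℝ Y, ∀ x, 0 ≤ (M *ᵥ q) x) ∨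
      (∃ p ∈ stdSimplex ℝ X, ∀ y, (p ᵥ* M) y < 0) := by
  classical
  obtain ⟨p, hp, q, hq, hsaddle⟩ := M.exists_isSaddlePointOn_stdSimplex
  rcases le_or_gt 0 (p ⬝ᵥ M *ᵥ q) with hv | hv
  · refine .inl ⟨q, hq, fun x => ?_⟩
    simpa using hv.trans (hsaddle _ (single_mem_stdSimplex ℝ x) q hq)
  · refine .inr ⟨p, hp, fun y => ?_⟩
    simpa only [dotProduct_mulVec, dotProduct_single, mul_one]
      using (hsaddle p hp _ (single_mem_stdSimplex ℝ y)).trans_lt hv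

theorem mul_mem_stdSimplex {𝕜 ι κ : Type*} [Semiring 𝕜] [PartialOrder 𝕜] [IsOrderedRing 𝕜]
    [Fintype ι] [Fintype κ] {p : ι → 𝕜} {q : κ → 𝕜}
    (hp : p ∈ stdSimplex 𝕜 ι) (hq : q ∈ stdSimplex 𝕜 κ) :
    (fun x : ι × κ => p x.1 * q x.2) ∈ stdSimplex 𝕜 (ι × κ) :=
  ⟨fun x => mul_nonneg (hp.1 _) (hq.1 _), by
    rw [Fintype.sum_prod_type, ← Fintype.sum_mul_sum, hp.2, hq.2, one_mul]⟩

theorem sum_mul_neg_of_mem_stdSimplex {ι : Type*} [Fintype ι] {w g : ι → ℝ}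
    (hw : w ∈ stdSimplex ℝ ι) (hg : ∀ i, g i < 0) : ∑ i, w i * g i < 0 := by
  obtain ⟨i, -, hi⟩ := (sum_pos_iff_of_nonneg fun i _ => hw.1 i).1 (hw.2.symm ▸ one_pos)
  calc ∑ i, w i * g i < ∑ _i : ι, (0 : ℝ) :=
        sum_lt_sum (fun j _ => mul_nonpos_of_nonneg_of_nonpos (hw.1 j) (hg j).le)
          ⟨i, mem_univ i, mul_neg_of_pos_of_neg hi (hg i)⟩
    _ = 0 := sum_const_zero

/-- `p` is a stationary distribution of the continuous-time Markov chain with jump rates `α`. -/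
theorem exists_mem_stdSimplex_inflow_eq_outflow {ι : Type*} [Fintype ι] [Nonempty ι]
    (α : ι → ι → ℝ) (hα : ∀ i j, 0 ≤ α i j) :
    ∃ p ∈ stdSimplex ℝ ι, ∀ j, ∑ i, p i * α i j = p j * ∑ k, α j k := by
  classical
  set M : Matrix ι ι ℝ := .of fun j i => α i j - if i = j then ∑ k, α j k else 0
  rcases M.exists_mulVec_nonneg_or_exists_vecMul_neg with ⟨p, hp, hnet⟩ | ⟨q, -, hnet⟩
  · have hnet_eq : ∀ j, (M *ᵥ p) j = ∑ i, p i * α i j - p j * ∑ k, α j k := by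
      intro j
      simp only [M, mulVec, dotProduct, of_apply, sub_mul, sum_sub_distrib, ite_mul, zero_mul,
        sum_ite_eq', mem_univ, if_true]
      simp only [mul_comm]
    have htotal : ∑ j, (M *ᵥ p) j = 0 := by
      simp only [hnet_eq, sum_sub_distrib, mul_sum]
      rw [sum_comm, sub_self]
    refine ⟨p, hp, fun j => ?_⟩
    have hnet_zero := (sum_eq_zero_iff_of_nonneg fun j _ => hnet j).1 htotal j (mem_univ j)
    linarith [hnet_eq j]
  · obtain ⟨i, -, hmin⟩ := exists_min_image univ q univ_nonempty
    have hnet_eq : (q ᵥ* M) i = ∑ j, q j * α i j - q i * ∑ k, α i k := by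
      simp [M, vecMul, dotProduct, mul_sub, sum_sub_distrib, mul_ite]
    -- the strict sign condition on `q ᵥ* M` fails at a minimum of `q`
    have hinflow : q i * ∑ k, α i k ≤ ∑ j, q j * α i j := by
      rw [mul_sum]
      exact sum_le_sum fun j _ => mul_le_mul_of_nonneg_right (hmin j (mem_univ j)) (hα i j)
    linarith [hnet i]

theorem sum_mul_sub_eq_zero_of_inflow_eq_outflow {ι : Type*} [Fintype ι] {α : ι → ι → ℝ}
    {p : ι → ℝ} (hp : ∀ j, ∑ i, p i * α i j = p j * ∑ k, α j k) (v : ι → ℝ) :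
    ∑ i, ∑ j, p i * α i j * (v i - v j) = 0 := by
  simp only [mul_sub, sum_sub_distrib, ← sum_mul]
  rw [sub_eq_zero, sum_comm]
  simp only [← sum_mul, hp, mul_sum]

section Game

variable {R C : Type*} [Fintype R] [Fintype C]

/-- The row `.inl (c, c')` is the column player's deviation "told `c`, play `c'`", and
`.inr (r, r')` the row player's "told `r`, play `r'`"; the entry is the deviator's gain from it
at the recommended outcome. -/
def deviationGain [DecidableEq R] [DecidableEq C] (u1 u2 : R → C → ℝ) :
    Matrix ((C × C) ⊕ (R × R)) (R × C) ℝ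
  | .inl (c, c'), (r, c₀) => if c₀ = c then u2 r c - u2 r c' else 0
  | .inr (r, r'), (r₀, c) => if r₀ = r then u1 r c - u1 r' c else 0

section Gain

variable [DecidableEq R] [DecidableEq C] (u1 u2 : R → C → ℝ)

theorem deviationGain_mulVec_inl (σ : R × C → ℝ) (c c' : C) :
    (deviationGain u1 u2 *ᵥ σ) (.inl (c, c')) = ∑ r, σ (r, c) * (u2 r c - u2 r c') := by
  simp [mulVec, dotProduct, deviationGain, Fintype.sum_prod_type, mul_comm]

theorem deviationGain_mulVec_inr (σ : R × C → ℝ) (r r' : R) :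
    (deviationGain u1 u2 *ᵥ σ) (.inr (r, r')) = ∑ c, σ (r, c) * (u1 r c - u1 r' c) := by
  simp [mulVec, dotProduct, deviationGain, Fintype.sum_prod_type, mul_comm]

theorem vecMul_deviationGain (q : (C × C) ⊕ (R × R) → ℝ) (r : R) (c : C) :
    (q ᵥ* deviationGain u1 u2) (r, c) =
      ∑ c', q (.inl (c, c')) * (u2 r c - u2 r c') +
        ∑ r', q (.inr (r, r')) * (u1 r c - u1 r' c) := by
  simp [vecMul, dotProduct, deviationGain, Fintype.sum_sum_type, Fintype.sum_prod_type, mul_ite]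

theorem sum_mul_vecMul_deviationGain_eq_zero {q : (C × C) ⊕ (R × R) → ℝ} {p : R → ℝ}
    {p' : C → ℝ}
    (hp : ∀ r', ∑ r, p r * q (.inr (r, r')) = p r' * ∑ r'', q (.inr (r', r'')))
    (hp' : ∀ c', ∑ c, p' c * q (.inl (c, c')) = p' c' * ∑ c'', q (.inl (c', c''))) :
    ∑ r, ∑ c, p r * p' c * (q ᵥ* deviationGain u1 u2) (r, c) = 0 := by
  have hcol : ∑ r, ∑ c, ∑ c', p r * p' c * (q (.inl (c, c')) * (u2 r c - u2 r c')) = 0 := by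
    refine sum_eq_zero fun r _ => ?_
    calc ∑ c, ∑ c', p r * p' c * (q (.inl (c, c')) * (u2 r c - u2 r c'))
        = p r * ∑ c, ∑ c', p' c * q (.inl (c, c')) * (u2 r c - u2 r c') := by
          simp only [mul_sum]
          exact sum_congr rfl fun _ _ => sum_congr rfl fun _ _ => by ring
      _ = 0 := by rw [sum_mul_sub_eq_zero_of_inflow_eq_outflow hp', mul_zero]
  have hrow : ∑ r, ∑ c, ∑ r', p r * p' c * (q (.inr (r, r')) * (u1 r c - u1 r' c)) = 0 := by
    rw [sum_comm]
    refine sum_eq_zero fun c _ => ?_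
    calc ∑ r, ∑ r', p r * p' c * (q (.inr (r, r')) * (u1 r c - u1 r' c))
        = p' c * ∑ r, ∑ r', p r * q (.inr (r, r')) * (u1 r c - u1 r' c) := by
          simp only [mul_sum]
          exact sum_congr rfl fun _ _ => sum_congr rfl fun _ _ => by ring
      _ = 0 := by rw [sum_mul_sub_eq_zero_of_inflow_eq_outflow hp (u1 · c), mul_zero]
  simp only [vecMul_deviationGain, mul_add, sum_add_distrib, mul_sum, hcol, hrow, add_zero]

end Gain

/-- `sis r` labels the SIS containing `r`: the row deviation `r → r'` is undetectable exactly
when `r` and `r'` share an SIS. -/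
def sisCorrelatedEquilibria {ι : Type*} (u1 u2 : R → C → ℝ) (sis : R → ι) :
    Set (R → C → ℝ) :=
  {σ | (∀ r c, 0 ≤ σ r c) ∧ (∑ r, ∑ c, σ r c) = 1 ∧
    (∀ c c', 0 ≤ ∑ r, σ r c * (u2 r c - u2 r c')) ∧
    (∀ r r', sis r = sis r' → 0 ≤ ∑ c, σ r c * (u1 r c - u1 r' c))}

/-- With a single SIS every row deviation is undetectable, which gives Aumann's correlated
equilibria. -/
def correlatedEquilibria (u1 u2 : R → C → ℝ) : Set (R → C → ℝ) :=
  sisCorrelatedEquilibria u1 u2 fun _ : R => ()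

variable {ι : Type*} (u1 u2 : R → C → ℝ) (sis : R → ι)

theorem correlatedEquilibria_subset_sisCorrelatedEquilibria :
    correlatedEquilibria u1 u2 ⊆ sisCorrelatedEquilibria u1 u2 sis :=
  fun _ ⟨h0, h1, hcol, hrow⟩ => ⟨h0, h1, hcol, fun r r' _ => hrow r r' rfl⟩

theorem nonempty_correlatedEquilibria [Nonempty R] [Nonempty C] :
    (correlatedEquilibria u1 u2).Nonempty := by
  classical
  rcases (deviationGain u1 u2).exists_mulVec_nonneg_or_exists_vecMul_neg
    with ⟨σ, hσ, hgain⟩ | ⟨q, hq, hloss⟩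
  · refine ⟨fun r c => σ (r, c), fun r c => hσ.1 _, by rw [← Fintype.sum_prod_type, hσ.2],
      fun c c' => ?_, fun r r' _ => ?_⟩
    · simpa only [deviationGain_mulVec_inl] using hgain (.inl (c, c'))
    · simpa only [deviationGain_mulVec_inr] using hgain (.inr (r, r'))
  · obtain ⟨p, hp, hp_bal⟩ :=
      exists_mem_stdSimplex_inflow_eq_outflow (fun r r' => q (.inr (r, r'))) fun _ _ => hq.1 _
    obtain ⟨p', hp', hp'_bal⟩ :=
      exists_mem_stdSimplex_inflow_eq_outflow (fun c c' => q (.inl (c, c'))) fun _ _ => hq.1 _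
    have hneg := sum_mul_neg_of_mem_stdSimplex (mul_mem_stdSimplex hp hp') hloss
    rw [Fintype.sum_prod_type] at hneg
    exact absurd (sum_mul_vecMul_deviationGain_eq_zero u1 u2 hp_bal hp'_bal) hneg.ne

theorem convex_sisCorrelatedEquilibria : Convex ℝ (sisCorrelatedEquilibria u1 u2 sis) := by
  rintro σ ⟨h0, h1, hcol, hrow⟩ τ ⟨h0', h1', hcol', hrow'⟩ a b ha hb hab
  refine ⟨fun r c => ?_, ?_, fun c c' => ?_, fun r r' h => ?_⟩ <;>
    simp only [Pi.add_apply, Pi.smul_apply, smul_eq_mul, add_mul, mul_assoc, sum_add_distrib,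
      ← mul_sum]
  · exact add_nonneg (mul_nonneg ha (h0 r c)) (mul_nonneg hb (h0' r c))
  · rw [h1, h1', mul_one, mul_one, hab]
  · exact add_nonneg (mul_nonneg ha (hcol c c')) (mul_nonneg hb (hcol' c c'))
  · exact add_nonneg (mul_nonneg ha (hrow r r' h)) (mul_nonneg hb (hrow' r r' h))

theorem isClosed_sisCorrelatedEquilibria : IsClosed (sisCorrelatedEquilibria u1 u2 sis) := by
  simp only [sisCorrelatedEquilibria, Set.ofPred_and, Set.ofPred_forall]
  refine .inter ?_ (.inter (isClosed_eq (by fun_prop) continuous_const) (.inter ?_ ?_)) <;>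
    refine isClosed_iInter fun _ => isClosed_iInter fun _ => ?_
  · exact isClosed_le continuous_const (by fun_prop)
  · exact isClosed_le continuous_const (by fun_prop)
  · exact isClosed_iInter fun _ => isClosed_le continuous_const (by fun_prop)

theorem isCompact_sisCorrelatedEquilibria : IsCompact (sisCorrelatedEquilibria u1 u2 sis) := by
  have hcurry : IsCompact (Function.curry '' stdSimplex ℝ (R × C)) :=
    (isCompact_stdSimplex ℝ (R × C)).image
      (continuous_pi fun r => continuous_pi fun c => continuous_apply (r, c))
  refine hcurry.of_isClosed_subset (isClosed_sisCorrelatedEquilibria u1 u2 sis) fun σ hσ => ?_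
  exact ⟨fun x => σ x.1 x.2, ⟨fun x => hσ.1 _ _, by rw [Fintype.sum_prod_type, hσ.2.1]⟩, rfl⟩

end Game

/-- for a fixed finite game and SIS partition, the set of
correlated profiles with no undetectable beneficial deviations is a nonempty,
compact, convex subset of the simplex over R × C (a polytope, being cut out by
finitely many linear inequalities); hence a SESLO exists, i.e. a correlated
profile with no undetectable beneficial deviations maximizing the row player's
expected utility. -/
theorem SESLO_exists
    {R C ι : Type*} [Fintype R] [Fintype C] [Nonempty R] [Nonempty C]
    (u1 u2 : R → C → ℝ) (sis : R → ι) :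
    let K : Set (R → C → ℝ) :=
      {σ | (∀ r c, 0 ≤ σ r c) ∧ (∑ r, ∑ c, σ r c) = 1 ∧
        (∀ c c', 0 ≤ ∑ r, σ r c * (u2 r c - u2 r c')) ∧
        (∀ r r', sis r = sis r' → 0 ≤ ∑ c, σ r c * (u1 r c - u1 r' c))}
    K.Nonempty ∧ Convex ℝ K ∧ IsCompact K ∧
      ∃ σ ∈ K, ∀ σ' ∈ K,
        ∑ r, ∑ c, σ' r c * u1 r c ≤ ∑ r, ∑ c, σ r c * u1 r c := by
  intro K
  have hne : K.Nonempty := (nonempty_correlatedEquilibria u1 u2).mono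
    (correlatedEquilibria_subset_sisCorrelatedEquilibria u1 u2 sis)
  have hK : IsCompact K := isCompact_sisCorrelatedEquilibria u1 u2 sis
  obtain ⟨σ, hσ, hmax⟩ := hK.exists_isMaxOn hne
    (f := fun σ => ∑ r, ∑ c, σ r c * u1 r c) (by fun_prop : Continuous _).continuousOn
  exact ⟨hne, convex_sisCorrelatedEquilibria u1 u2 sis, hK, σ, hσ, fun σ' hσ' => hmax hσ'⟩
end
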